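/- Let X be a random vector in ℝ^d with law having density ρ (with respect to Lebesgue measure and finite first moment), let ε ∼ N(0, σ²I_d) be independent of X, and let X̃ = X + ε with density ρ̃. Then ρ̃ is smooth and positive, and Tweedie's formula holds: E[X | X̃ = x̃] = x̃ + σ² ∇ log ρ̃(x̃) for every x̃ ∈ ℝ^d. -/

import Mathlib

open MeasureTheory Real

set_option maxHeartbeats 2000000
set_option synthInstance.maxHeartbeats 400000

noncomputable section

variable {d : ℕ}

def gaussKernel (d : ℕ) (τ : ℝ) (z : EuclideanSpace ℝ (Fin d)) : ℝ :=
  (2 * π * τ) ^ (-(d : ℝ) / 2) * Real.exp (-‖z‖ ^ 2 / (2 * τ))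

/-- The density of `X̃ = X + ε`, `ε ∼ N(0, σ²I)`: `ρ̃ = γ_{σ²} * ρ`. -/
def noisyDensity (d : ℕ) (σ : ℝ) (ρ : EuclideanSpace ℝ (Fin d) → ℝ)
    (z : EuclideanSpace ℝ (Fin d)) : ℝ :=
  ∫ y, gaussKernel d (σ ^ 2) (z - y) * ρ y

/-- The posterior mean `E[X | X̃ = x̃] = (∫ x γ_{σ²}(x̃−x)ρ(x) dx)/ρ̃(x̃)`. -/
def tweediePostMean (d : ℕ) (σ : ℝ) (ρ : EuclideanSpace ℝ (Fin d) → ℝ)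
    (z : EuclideanSpace ℝ (Fin d)) : EuclideanSpace ℝ (Fin d) :=
  (noisyDensity d σ ρ z)⁻¹ • ∫ y, (gaussKernel d (σ ^ 2) (z - y) * ρ y) • y

/-! ### Auxiliary development -/

open scoped RealInnerProductSpace Nat

namespace TweedieAux

variable {d : ℕ}

local notation "En" => EuclideanSpace ℝ (Fin d)

/-- The continuous `n`-multilinear map `(h₁, …, hₙ) ↦ ∏ᵢ ⟪y, hᵢ⟫`. -/
def innerPow (d n : ℕ) (y : En) :
    ContinuousMultilinearMap ℝ (fun _ : Fin n => En) ℝ :=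
  (ContinuousMultilinearMap.mkPiAlgebra ℝ (Fin n) ℝ).compContinuousLinearMap
    fun _ => innerSL ℝ y

lemma innerPow_apply (n : ℕ) (y h : En) :
    innerPow d n y (fun _ => h) = ⟪y, h⟫ ^ n := by
  simp [innerPow, Finset.prod_const]

lemma norm_innerPow_le (n : ℕ) (y : En) : ‖innerPow d n y‖ ≤ ‖y‖ ^ n := by
  refine (ContinuousMultilinearMap.norm_compContinuousLinearMap_le _ _).trans ?_
  simp [ContinuousMultilinearMap.norm_mkPiAlgebra, innerSL_apply_norm,
    Finset.prod_const]

lemma continuous_innerPow (n : ℕ) : Continuous fun y : En => innerPow d n y := by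
  have h1 : Continuous fun y : En => (fun _ : Fin n => innerSL ℝ y) :=
    continuous_pi fun _ => (innerSL ℝ (E := En)).continuous
  have h2 := (ContinuousMultilinearMap.compContinuousLinearMapLRight
    (E := fun _ : Fin n => En) (G := ℝ)
    (ContinuousMultilinearMap.mkPiAlgebra ℝ (Fin n) ℝ)).cont
  exact h2.comp h1

/-- `tⁿ ≤ n! c⁻ⁿ e^{c t}` for `t ≥ 0`, `c > 0`. -/
lemma pow_le_factorial_inv_exp {t c : ℝ} (ht : 0 ≤ t) (hc : 0 < c) (n : ℕ) :
    t ^ n ≤ (n ! : ℝ) * c⁻¹ ^ n * Real.exp (c * t) := by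
  have h := Real.pow_div_factorial_le_exp (x := c * t) (by positivity) n
  have h2 : (c * t) ^ n ≤ (n ! : ℝ) * Real.exp (c * t) := by
    rw [div_le_iff₀ (by positivity : (0:ℝ) < (n ! : ℝ))] at h
    linarith [h]
  calc t ^ n = c⁻¹ ^ n * (c * t) ^ n := by
        rw [mul_pow, ← mul_assoc, ← mul_pow, inv_mul_cancel₀ hc.ne', one_pow, one_mul]
    _ ≤ c⁻¹ ^ n * ((n ! : ℝ) * Real.exp (c * t)) := by
        apply mul_le_mul_of_nonneg_left h2 (by positivity)
    _ = (n ! : ℝ) * c⁻¹ ^ n * Real.exp (c * t) := by ring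

/-- The key analyticity lemma: if `g` has all exponential moments, then
`z ↦ ∫ e^{⟪y,z⟫} g(y) dy` is `C^ω`. -/
lemma contDiff_integral_exp_inner {g : En → ℝ}
    (hg : AEStronglyMeasurable g volume)
    (H : ∀ R : ℝ, Integrable fun y : En => Real.exp (R * ‖y‖) * |g y|) :
    ContDiff ℝ (⊤ : WithTop ℕ∞) fun z : En => ∫ y : En, Real.exp ⟪y, z⟫ * g y := by
  set f : En → ℝ := fun z => ∫ y : En, Real.exp ⟪y, z⟫ * g y with hf
  have hGabs : AEStronglyMeasurable (fun y : En => |g y|) volume := by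
    simpa [Real.norm_eq_abs] using hg.norm
  -- the coefficient integrands
  set M : (n : ℕ) → En → ContinuousMultilinearMap ℝ (fun _ : Fin n => En) ℝ :=
    fun n y => g y • innerPow d n y with hM
  have hM_meas : ∀ n, AEStronglyMeasurable (M n) volume := by
    intro n
    have hΦ : Continuous fun p : ℝ × En =>
        p.1 • innerPow d n p.2 :=
      continuous_fst.smul ((continuous_innerPow n).comp continuous_snd)
    exact hΦ.comp_aestronglyMeasurable (hg.prodMk aestronglyMeasurable_id)
  have hM_norm : ∀ n (y : En), ‖M n y‖ ≤ ‖y‖ ^ n * |g y| := by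
    intro n y
    rw [hM]
    calc ‖g y • innerPow d n y‖ ≤ |g y| * ‖innerPow d n y‖ := by
          simpa using ContinuousMultilinearMap.opNorm_smul_le (g y) (innerPow d n y)
      _ ≤ |g y| * ‖y‖ ^ n := by
          exact mul_le_mul_of_nonneg_left (norm_innerPow_le n y) (abs_nonneg _)
      _ = ‖y‖ ^ n * |g y| := mul_comm _ _
  -- integrability of `‖y‖ⁿ |g y|` and of `M n`
  have hpow_int : ∀ (c : ℝ), 0 < c → ∀ n : ℕ,
      Integrable (fun y : En => ‖y‖ ^ n * |g y|) := by
    intro c hc n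
    refine Integrable.mono' (((H c).const_mul ((n ! : ℝ) * c⁻¹ ^ n))) ?_ ?_
    · exact ((continuous_norm.pow n).aestronglyMeasurable).mul hGabs
    · filter_upwards with y
      rw [Real.norm_eq_abs, abs_of_nonneg (by positivity)]
      calc ‖y‖ ^ n * |g y| ≤ ((n ! : ℝ) * c⁻¹ ^ n * Real.exp (c * ‖y‖)) * |g y| :=
            mul_le_mul_of_nonneg_right
              (pow_le_factorial_inv_exp (norm_nonneg y) hc n) (abs_nonneg _)
        _ = (n ! : ℝ) * c⁻¹ ^ n * (Real.exp (c * ‖y‖) * |g y|) := by ring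
  have hM_int : ∀ n, Integrable (M n) := by
    intro n
    refine Integrable.mono' (hpow_int 1 one_pos n) (hM_meas n) ?_
    filter_upwards with y using hM_norm n y
  -- the power series
  set q : FormalMultilinearSeries ℝ En ℝ :=
    fun n => (n ! : ℝ)⁻¹ • ∫ y : En, M n y with hq
  have hq_norm : ∀ n, ‖q n‖ ≤ (n ! : ℝ)⁻¹ * ∫ y : En, ‖y‖ ^ n * |g y| := by
    intro n
    rw [hq]
    calc ‖(n ! : ℝ)⁻¹ • ∫ y : En, M n y‖ ≤ (n ! : ℝ)⁻¹ * ‖∫ y : En, M n y‖ := by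
          have := ContinuousMultilinearMap.opNorm_smul_le
            ((n ! : ℝ)⁻¹) (∫ y : En, M n y)
          simpa [abs_of_nonneg (by positivity : (0:ℝ) ≤ (n ! : ℝ)⁻¹)] using this
      _ ≤ (n ! : ℝ)⁻¹ * ∫ y : En, ‖M n y‖ := by
          refine mul_le_mul_of_nonneg_left (norm_integral_le_integral_norm _)
            (by positivity)
      _ ≤ (n ! : ℝ)⁻¹ * ∫ y : En, ‖y‖ ^ n * |g y| := by
          refine mul_le_mul_of_nonneg_left ?_ (by positivity)
          exact integral_mono ((hM_int n).norm) (hpow_int 1 one_pos n)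
            fun y => hM_norm n y
  -- summability of the coefficients against any radius
  have hsum : ∀ r : ℝ, 0 ≤ r →
      Summable fun n => ((n ! : ℝ)⁻¹ * ∫ y : En, ‖y‖ ^ n * |g y|) * r ^ n := by
    intro r hr
    have hc : (0:ℝ) < 2 * r + 1 := by linarith
    set C : ℝ := ∫ y : En, Real.exp ((2 * r + 1) * ‖y‖) * |g y| with hC
    have hC0 : 0 ≤ C := integral_nonneg fun y => by positivity
    refine Summable.of_nonneg_of_le (fun n => ?_) (fun n => ?_)
      (((summable_geometric_two).mul_right C))
    · have : 0 ≤ ∫ y : En, ‖y‖ ^ n * |g y| := integral_nonneg fun y => by positivity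
      positivity
    · have hint : ∫ y : En, ‖y‖ ^ n * |g y| ≤
          (n ! : ℝ) * (2 * r + 1)⁻¹ ^ n * C := by
        rw [hC]
        calc ∫ y : En, ‖y‖ ^ n * |g y|
            ≤ ∫ y : En, (n ! : ℝ) * (2 * r + 1)⁻¹ ^ n *
                (Real.exp ((2 * r + 1) * ‖y‖) * |g y|) := by
              refine integral_mono (hpow_int _ hc n) ((H _).const_mul _) fun y => ?_
              calc ‖y‖ ^ n * |g y|
                  ≤ ((n ! : ℝ) * (2 * r + 1)⁻¹ ^ n * Real.exp ((2 * r + 1) * ‖y‖)) *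
                      |g y| :=
                    mul_le_mul_of_nonneg_right
                      (pow_le_factorial_inv_exp (norm_nonneg y) hc n) (abs_nonneg _)
                _ = (n ! : ℝ) * (2 * r + 1)⁻¹ ^ n *
                      (Real.exp ((2 * r + 1) * ‖y‖) * |g y|) := by ring
          _ = (n ! : ℝ) * (2 * r + 1)⁻¹ ^ n * C := by rw [integral_const_mul]
      calc ((n ! : ℝ)⁻¹ * ∫ y : En, ‖y‖ ^ n * |g y|) * r ^ n
          ≤ ((n ! : ℝ)⁻¹ * ((n ! : ℝ) * (2 * r + 1)⁻¹ ^ n * C)) * r ^ n := by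
            refine mul_le_mul_of_nonneg_right
              (mul_le_mul_of_nonneg_left hint (by positivity)) (by positivity)
        _ = (r / (2 * r + 1)) ^ n * C := by
            have hfac : ((n ! : ℝ)) ≠ 0 := by positivity
            field_simp [div_pow]
            ring
        _ ≤ (1 / 2) ^ n * C := by
            refine mul_le_mul_of_nonneg_right (pow_le_pow_left₀ (by positivity) ?_ n) hC0
            rw [div_le_div_iff₀ hc (by norm_num)]
            linarith
  -- radius is infinite
  have hradius : (⊤ : ENNReal) ≤ q.radius := by
    refine ENNReal.le_of_forall_nnreal_lt fun r _ => ?_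
    refine q.le_radius_of_summable ?_
    refine Summable.of_nonneg_of_le (fun n => by positivity) (fun n => ?_)
      (hsum r r.2)
    exact mul_le_mul_of_nonneg_right (hq_norm n) (by positivity)
  -- the power series converges to f on the whole space
  have hball : HasFPowerSeriesOnBall f q 0 ⊤ := by
    refine ⟨hradius, ENNReal.zero_lt_top, ?_⟩
    intro h _
    -- the summands
    set Fn : ℕ → En → ℝ := fun n y => (⟪y, h⟫ ^ n / n !) * g y with hFn
    have hFn_bound : ∀ n (y : En), ‖Fn n y‖ ≤ (n ! : ℝ)⁻¹ * (‖y‖ ^ n * |g y|) * ‖h‖ ^ n := by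
      intro n y
      rw [hFn, Real.norm_eq_abs, abs_mul, abs_div, abs_pow, abs_of_nonneg
        (by positivity : (0:ℝ) ≤ (n ! : ℝ))]
      have h1 : |⟪y, h⟫| ≤ ‖y‖ * ‖h‖ := abs_real_inner_le_norm y h
      calc |⟪y, h⟫| ^ n / (n ! : ℝ) * |g y|
          ≤ (‖y‖ * ‖h‖) ^ n / (n ! : ℝ) * |g y| := by
            gcongr <;> first | exact abs_nonneg _ | exact h1 | skip
        _ = (n ! : ℝ)⁻¹ * (‖y‖ ^ n * |g y|) * ‖h‖ ^ n := by
            rw [mul_pow]; ring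
    have hFn_meas : ∀ n, AEStronglyMeasurable (Fn n) volume := by
      intro n
      refine AEStronglyMeasurable.mul ?_ hg
      refine Continuous.aestronglyMeasurable ?_
      have : Continuous fun y : En => ⟪y, h⟫ :=
        continuous_id.inner continuous_const
      exact (this.pow n).div_const _
    have hFn_int : ∀ n, Integrable (Fn n) := by
      intro n
      refine Integrable.mono' (((hpow_int 1 one_pos n).const_mul
        ((n ! : ℝ)⁻¹ * ‖h‖ ^ n))) (hFn_meas n) ?_
      filter_upwards with y
      calc ‖Fn n y‖ ≤ (n ! : ℝ)⁻¹ * (‖y‖ ^ n * |g y|) * ‖h‖ ^ n := hFn_bound n y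
        _ = (n ! : ℝ)⁻¹ * ‖h‖ ^ n * (‖y‖ ^ n * |g y|) := by ring
    have hFn_sum : Summable fun n => ∫ y : En, ‖Fn n y‖ := by
      refine Summable.of_nonneg_of_le
        (fun n => integral_nonneg fun y => norm_nonneg _) (fun n => ?_)
        (hsum ‖h‖ (norm_nonneg h))
      calc ∫ y : En, ‖Fn n y‖
          ≤ ∫ y : En, (n ! : ℝ)⁻¹ * (‖y‖ ^ n * |g y|) * ‖h‖ ^ n := by
            refine integral_mono (hFn_int n).norm ?_ fun y => hFn_bound n y
            exact ((hpow_int 1 one_pos n).const_mul _).mul_const _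
        _ = ((n ! : ℝ)⁻¹ * ‖h‖ ^ n) * ∫ y : En, ‖y‖ ^ n * |g y| := by
            rw [← integral_const_mul]
            exact integral_congr_ae (Filter.Eventually.of_forall fun y => by ring)
        _ = ((n ! : ℝ)⁻¹ * ∫ y : En, ‖y‖ ^ n * |g y|) * ‖h‖ ^ n := by ring
    have key := hasSum_integral_of_summable_integral_norm hFn_int hFn_sum
    -- identify the sum of the integrands
    have hid1 : ∀ y : En, (∑' n, Fn n y) = Real.exp ⟪y, h⟫ * g y := by
      intro y
      rw [hFn]
      have : HasSum (fun n => ⟪y, h⟫ ^ n / (n ! : ℝ)) (Real.exp ⟪y, h⟫) := by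
        rw [Real.exp_eq_exp_ℝ]
        exact NormedSpace.expSeries_div_hasSum_exp (⟪y, h⟫)
      rw [tsum_mul_right, this.tsum_eq]
    -- identify each coefficient application
    have hid2 : ∀ n : ℕ, (q n fun _ => h) = ∫ y : En, Fn n y := by
      intro n
      rw [hq]
      rw [ContinuousMultilinearMap.smul_apply,
        ContinuousMultilinearMap.integral_apply (hM_int n)]
      rw [smul_eq_mul, ← integral_const_mul]
      refine integral_congr_ae (Filter.Eventually.of_forall fun y => ?_)
      rw [hM]
      simp only [ContinuousMultilinearMap.smul_apply, innerPow_apply, smul_eq_mul]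
      rw [hFn]
      field_simp
    have hgoal : f (0 + h) = ∫ y : En, (∑' n, Fn n y) := by
      rw [zero_add, hf]
      exact integral_congr_ae (Filter.Eventually.of_forall fun y => (hid1 y).symm)
    rw [hgoal]
    exact HasSum.congr_fun key fun n => hid2 n
  have hAnal : AnalyticOnNhd ℝ f Set.univ := by
    intro x _
    exact hball.analyticAt_of_mem (by simp)
  exact hAnal.contDiff

end TweedieAux

/-- Tweedie's formula. If `X` has density `ρ` with finite first
moment and `X̃ = X + ε` with `ε ∼ N(0, σ²I_d)` independent, then the noisy density
`ρ̃` is smooth and positive and `E[X | X̃ = x̃] = x̃ + σ² ∇log ρ̃(x̃)`. -/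
theorem tweedie_formula (σ : ℝ) (hσ : 0 < σ)
    (ρ : EuclideanSpace ℝ (Fin d) → ℝ)
    (hρpos : ∀ x, 0 ≤ ρ x) (hρint : Integrable ρ)
    (hρone : ∫ x, ρ x = 1)
    (hmom : Integrable (fun x => ‖x‖ * ρ x)) :
    ContDiff ℝ (⊤ : ℕ∞) (noisyDensity d σ ρ) ∧
    (∀ z, 0 < noisyDensity d σ ρ z) ∧
    ∀ z : EuclideanSpace ℝ (Fin d),
      tweediePostMean d σ ρ z
        = z + σ ^ 2 • gradient (fun u => Real.log (noisyDensity d σ ρ u)) z := by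
  have hτ : (0:ℝ) < σ ^ 2 := by positivity
  set K : ℝ := (2 * π * σ ^ 2) ^ (-(d : ℝ) / 2) with hKdef
  have hπ : (0:ℝ) < 2 * π * σ ^ 2 := by positivity
  have hK : (0:ℝ) < K := Real.rpow_pos_of_pos hπ _
  have hgauss_pos : ∀ u : EuclideanSpace ℝ (Fin d), 0 < gaussKernel d (σ ^ 2) u :=
    fun u => mul_pos hK (Real.exp_pos _)
  have hgauss_le : ∀ u : EuclideanSpace ℝ (Fin d), gaussKernel d (σ ^ 2) u ≤ K := by
    intro u
    have h1 : Real.exp (-‖u‖ ^ 2 / (2 * σ ^ 2)) ≤ 1 := by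
      rw [Real.exp_le_one_iff]
      have : (0:ℝ) ≤ ‖u‖ ^ 2 / (2 * σ ^ 2) := by positivity
      rw [neg_div]; linarith
    calc gaussKernel d (σ ^ 2) u = K * Real.exp (-‖u‖ ^ 2 / (2 * σ ^ 2)) := rfl
      _ ≤ K * 1 := mul_le_mul_of_nonneg_left h1 hK.le
      _ = K := mul_one K
  have hcont : ∀ z : EuclideanSpace ℝ (Fin d),
      Continuous fun y : EuclideanSpace ℝ (Fin d) => gaussKernel d (σ ^ 2) (z - y) := by
    intro z
    unfold gaussKernel
    fun_prop
  have hI1 : ∀ z : EuclideanSpace ℝ (Fin d),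
      Integrable fun y => gaussKernel d (σ ^ 2) (z - y) * ρ y := by
    intro z
    refine Integrable.mono' (hρint.const_mul K)
      (((hcont z).aestronglyMeasurable).mul hρint.1) ?_
    filter_upwards with y
    rw [Real.norm_eq_abs, abs_of_nonneg (mul_nonneg (hgauss_pos _).le (hρpos y))]
    exact mul_le_mul_of_nonneg_right (hgauss_le _) (hρpos y)
  have hI2 : ∀ z : EuclideanSpace ℝ (Fin d),
      Integrable fun y : EuclideanSpace ℝ (Fin d) =>
        (gaussKernel d (σ ^ 2) (z - y) * ρ y) • y := by
    intro z
    refine Integrable.mono' (hmom.const_mul K)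
      ((((hcont z).aestronglyMeasurable).mul hρint.1).smul aestronglyMeasurable_id) ?_
    filter_upwards with y
    rw [norm_smul, Real.norm_eq_abs, abs_of_nonneg (mul_nonneg (hgauss_pos _).le (hρpos y))]
    calc gaussKernel d (σ ^ 2) (z - y) * ρ y * ‖y‖ ≤ K * ρ y * ‖y‖ := by
          refine mul_le_mul_of_nonneg_right ?_ (norm_nonneg y)
          exact mul_le_mul_of_nonneg_right (hgauss_le _) (hρpos y)
      _ = K * (‖y‖ * ρ y) := by ring
  -- positivity
  have hpos : ∀ z, 0 < noisyDensity d σ ρ z := by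
    intro z
    have hsupp : (Function.support fun y => gaussKernel d (σ ^ 2) (z - y) * ρ y)
        = Function.support ρ := by
      ext y
      simp [Function.mem_support, mul_eq_zero, (hgauss_pos (z - y)).ne']
    refine (integral_pos_iff_support_of_nonneg
      (fun y => mul_nonneg (hgauss_pos _).le (hρpos y)) (hI1 z)).2 ?_
    rw [hsupp]
    exact (integral_pos_iff_support_of_nonneg (fun y => hρpos y) hρint).1
      (by rw [hρone]; norm_num)
  -- smoothness
  set g : EuclideanSpace ℝ (Fin d) → ℝ :=
    fun y => Real.exp (-‖y‖ ^ 2 / (2 * σ ^ 2)) * ρ y with hgdef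
  have hg_meas : AEStronglyMeasurable g volume := by
    refine (Continuous.aestronglyMeasurable ?_).mul hρint.1
    fun_prop
  have hgabs : ∀ y, |g y| = Real.exp (-‖y‖ ^ 2 / (2 * σ ^ 2)) * ρ y := by
    intro y
    exact abs_of_nonneg (mul_nonneg (Real.exp_pos _).le (hρpos y))
  have hg_exp : ∀ R : ℝ, Integrable fun y : EuclideanSpace ℝ (Fin d) =>
      Real.exp (R * ‖y‖) * |g y| := by
    intro R
    refine Integrable.mono' (hρint.const_mul (Real.exp (R ^ 2 * σ ^ 2 / 2))) ?_ ?_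
    · refine (Continuous.aestronglyMeasurable (by fun_prop)).mul ?_
      simpa [Real.norm_eq_abs] using hg_meas.norm
    · filter_upwards with y
      rw [Real.norm_eq_abs, abs_of_nonneg (mul_nonneg (Real.exp_pos _).le (abs_nonneg _)),
        hgabs y]
      have h1 : Real.exp (R * ‖y‖) * Real.exp (-‖y‖ ^ 2 / (2 * σ ^ 2))
          ≤ Real.exp (R ^ 2 * σ ^ 2 / 2) := by
        rw [← Real.exp_add, Real.exp_le_exp, ← sub_nonneg]
        have hexpand : R ^ 2 * σ ^ 2 / 2 - (R * ‖y‖ + -‖y‖ ^ 2 / (2 * σ ^ 2))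
            = (‖y‖ - R * σ ^ 2) ^ 2 / (2 * σ ^ 2) := by
          field_simp
          ring
        rw [hexpand]
        positivity
      calc Real.exp (R * ‖y‖) * (Real.exp (-‖y‖ ^ 2 / (2 * σ ^ 2)) * ρ y)
          = Real.exp (R * ‖y‖) * Real.exp (-‖y‖ ^ 2 / (2 * σ ^ 2)) * ρ y := by ring
        _ ≤ Real.exp (R ^ 2 * σ ^ 2 / 2) * ρ y :=
            mul_le_mul_of_nonneg_right h1 (hρpos y)
  have hrepr : noisyDensity d σ ρ = fun z => (K * Real.exp (-‖z‖ ^ 2 / (2 * σ ^ 2))) *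
      ∫ y : EuclideanSpace ℝ (Fin d), Real.exp ⟪y, (σ ^ 2)⁻¹ • z⟫ * g y := by
    funext z
    unfold noisyDensity
    rw [← integral_const_mul]
    refine integral_congr_ae (Filter.Eventually.of_forall fun y => ?_)
    dsimp only
    rw [real_inner_smul_right]
    have hexp : Real.exp (-‖z - y‖ ^ 2 / (2 * σ ^ 2))
        = Real.exp (-‖z‖ ^ 2 / (2 * σ ^ 2)) *
          (Real.exp ((σ ^ 2)⁻¹ * ⟪y, z⟫) * Real.exp (-‖y‖ ^ 2 / (2 * σ ^ 2))) := by
      rw [← Real.exp_add, ← Real.exp_add,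
        @norm_sub_sq_real (EuclideanSpace ℝ (Fin d)) _ _ z y, real_inner_comm y z]
      congr 1
      field_simp
      ring
    calc gaussKernel d (σ ^ 2) (z - y) * ρ y
        = K * Real.exp (-‖z - y‖ ^ 2 / (2 * σ ^ 2)) * ρ y := rfl
      _ = K * Real.exp (-‖z‖ ^ 2 / (2 * σ ^ 2)) *
            (Real.exp ((σ ^ 2)⁻¹ * ⟪y, z⟫) * (Real.exp (-‖y‖ ^ 2 / (2 * σ ^ 2)) * ρ y)) := by
          rw [hexp]; ring
      _ = K * Real.exp (-‖z‖ ^ 2 / (2 * σ ^ 2)) *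
            (Real.exp ((σ ^ 2)⁻¹ * ⟪y, z⟫) * g y) := by rw [hgdef]
  have hsmooth : ContDiff ℝ (⊤ : ℕ∞) (noisyDensity d σ ρ) := by
    rw [hrepr]
    have h1 := TweedieAux.contDiff_integral_exp_inner hg_meas hg_exp
    have h2 : ContDiff ℝ (⊤ : WithTop ℕ∞)
        fun z : EuclideanSpace ℝ (Fin d) => (σ ^ 2)⁻¹ • z :=
      contDiff_id.const_smul _
    have h4 : ContDiff ℝ (⊤ : WithTop ℕ∞)
        fun z : EuclideanSpace ℝ (Fin d) => K * Real.exp (-‖z‖ ^ 2 / (2 * σ ^ 2)) :=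
      contDiff_const.mul (Real.contDiff_exp.comp (((contDiff_norm_sq ℝ).neg).div_const _))
    exact (h4.mul (h1.comp h2)).of_le le_top
  refine ⟨hsmooth, hpos, ?_⟩
  -- Tweedie's identity
  intro z
  set Dz : ℝ := noisyDensity d σ ρ z with hDzdef
  set Mz : EuclideanSpace ℝ (Fin d) :=
    ∫ y, (gaussKernel d (σ ^ 2) (z - y) * ρ y) • y with hMzdef
  set v : EuclideanSpace ℝ (Fin d) := (σ ^ 2)⁻¹ • (Mz - Dz • z) with hvdef
  -- the pointwise derivative
  set F' : EuclideanSpace ℝ (Fin d) → EuclideanSpace ℝ (Fin d) →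
      (EuclideanSpace ℝ (Fin d) →L[ℝ] ℝ) := fun x y =>
    (-(σ ^ 2)⁻¹ * (gaussKernel d (σ ^ 2) (x - y) * ρ y)) • (innerSL ℝ (x - y)) with hF'def
  have hF'norm : ∀ x y : EuclideanSpace ℝ (Fin d),
      ‖F' x y‖ ≤ (σ ^ 2)⁻¹ * K * ((‖x‖ + ‖y‖) * ρ y) := by
    intro x y
    rw [hF'def]
    calc ‖(-(σ ^ 2)⁻¹ * (gaussKernel d (σ ^ 2) (x - y) * ρ y)) • (innerSL ℝ (x - y))‖
        ≤ ‖(-(σ ^ 2)⁻¹ * (gaussKernel d (σ ^ 2) (x - y) * ρ y))‖ *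
            ‖innerSL ℝ (x - y)‖ :=
          ContinuousLinearMap.opNorm_smul_le _ _
      _ = |(-(σ ^ 2)⁻¹ * (gaussKernel d (σ ^ 2) (x - y) * ρ y))| * ‖x - y‖ := by
          rw [innerSL_apply_norm, Real.norm_eq_abs]
      _ = (σ ^ 2)⁻¹ * (gaussKernel d (σ ^ 2) (x - y) * ρ y) * ‖x - y‖ := by
          rw [abs_mul, abs_neg, abs_of_nonneg (inv_nonneg.2 hτ.le),
            abs_of_nonneg (mul_nonneg (hgauss_pos _).le (hρpos y))]
      _ ≤ (σ ^ 2)⁻¹ * (K * ρ y) * (‖x‖ + ‖y‖) := by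
          refine mul_le_mul ?_ (norm_sub_le x y) (norm_nonneg _)
            (mul_nonneg (by positivity) (mul_nonneg hK.le (hρpos y)))
          exact mul_le_mul_of_nonneg_left
            (mul_le_mul_of_nonneg_right (hgauss_le _) (hρpos y)) (by positivity)
      _ = (σ ^ 2)⁻¹ * K * ((‖x‖ + ‖y‖) * ρ y) := by ring
  have hF'meas : ∀ x : EuclideanSpace ℝ (Fin d),
      AEStronglyMeasurable (F' x) volume := by
    intro x
    have hΦ : Continuous fun p : ℝ × EuclideanSpace ℝ (Fin d) =>
        (-(σ ^ 2)⁻¹ * (gaussKernel d (σ ^ 2) (x - p.2) * p.1)) •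
          (innerSL ℝ (x - p.2)) := by
      have hs1 : Continuous fun p : ℝ × EuclideanSpace ℝ (Fin d) =>
          -(σ ^ 2)⁻¹ * (gaussKernel d (σ ^ 2) (x - p.2) * p.1) := by
        unfold gaussKernel
        fun_prop
      have hs2 : Continuous fun p : ℝ × EuclideanSpace ℝ (Fin d) =>
          innerSL ℝ (x - p.2) :=
        (innerSL ℝ).continuous.comp (continuous_const.sub continuous_snd)
      exact hs1.smul hs2
    have h6 : AEStronglyMeasurable
        (fun y : EuclideanSpace ℝ (Fin d) => (ρ y, y)) volume :=
      hρint.1.prodMk aestronglyMeasurable_id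
    have h5 := hΦ.comp_aestronglyMeasurable h6
    rw [hF'def]
    exact h5
  have hF'int : Integrable (F' z) volume := by
    refine Integrable.mono'
      (((((hρint.const_mul ‖z‖).add hmom)).const_mul ((σ ^ 2)⁻¹ * K))) (hF'meas z) ?_
    filter_upwards with y
    calc ‖F' z y‖ ≤ (σ ^ 2)⁻¹ * K * ((‖z‖ + ‖y‖) * ρ y) := hF'norm z y
      _ = (σ ^ 2)⁻¹ * K * (‖z‖ * ρ y + ‖y‖ * ρ y) := by ring
  have hderiv : ∀ (y x : EuclideanSpace ℝ (Fin d)),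
      HasFDerivAt (fun w : EuclideanSpace ℝ (Fin d) =>
        gaussKernel d (σ ^ 2) (w - y) * ρ y) (F' x y) x := by
    intro y x
    have h1 : HasFDerivAt (fun w : EuclideanSpace ℝ (Fin d) => w - y)
        (ContinuousLinearMap.id ℝ _) x := (hasFDerivAt_id x).sub_const y
    have h2 : HasFDerivAt (fun w : EuclideanSpace ℝ (Fin d) => ‖w - y‖ ^ 2)
        (2 • innerSL ℝ (x - y)) x := by
      simpa using h1.norm_sq
    have h3 := ((h2.const_mul (-(2 * σ ^ 2)⁻¹)).exp.const_mul
      ((2 * π * σ ^ 2) ^ (-(d : ℝ) / 2))).mul_const (ρ y)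
    have harg : ∀ w : EuclideanSpace ℝ (Fin d),
        -‖w - y‖ ^ 2 / (2 * σ ^ 2) = -(2 * σ ^ 2)⁻¹ * ‖w - y‖ ^ 2 := fun w => by
      ring
    have hfun : (fun w : EuclideanSpace ℝ (Fin d) =>
        gaussKernel d (σ ^ 2) (w - y) * ρ y)
        = fun w => (2 * π * σ ^ 2) ^ (-(d : ℝ) / 2) *
            Real.exp (-(2 * σ ^ 2)⁻¹ * ‖w - y‖ ^ 2) * ρ y := by
      funext w
      simp only [gaussKernel, harg]
    rw [hfun]
    refine h3.congr_fderiv ?_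
    rw [hF'def]
    ext w
    simp only [ContinuousLinearMap.smul_apply, innerSL_apply_apply, smul_eq_mul,
      ContinuousLinearMap.coe_smul', Pi.smul_apply, two_smul,
      ContinuousLinearMap.add_apply, gaussKernel, harg]
    ring
  have hbound_int : Integrable (fun y : EuclideanSpace ℝ (Fin d) =>
      (σ ^ 2)⁻¹ * K * ((‖z‖ + 1 + ‖y‖) * ρ y)) volume := by
    have h1 : Integrable (fun y : EuclideanSpace ℝ (Fin d) =>
        (‖z‖ + 1) * ρ y + ‖y‖ * ρ y) volume := (hρint.const_mul _).add hmom
    refine (h1.const_mul ((σ ^ 2)⁻¹ * K)).congr ?_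
    filter_upwards with y
    ring
  have happ : HasFDerivAt (noisyDensity d σ ρ)
      (∫ y, F' z y) z := by
    refine hasFDerivAt_integral_of_dominated_of_fderiv_le (Metric.ball_mem_nhds z one_pos)
      (Filter.Eventually.of_forall fun x =>
        ((hcont x).aestronglyMeasurable).mul hρint.1)
      (hI1 z) (hF'meas z) ?_ hbound_int ?_
    · filter_upwards with y
      intro x hx
      have hxz : ‖x‖ ≤ ‖z‖ + 1 := by
        have := mem_ball_iff_norm.1 hx
        calc ‖x‖ = ‖z + (x - z)‖ := by rw [show z + (x - z) = x from by abel]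
          _ ≤ ‖z‖ + ‖x - z‖ := norm_add_le _ _
          _ ≤ ‖z‖ + 1 := by linarith
      calc ‖F' x y‖ ≤ (σ ^ 2)⁻¹ * K * ((‖x‖ + ‖y‖) * ρ y) := hF'norm x y
        _ ≤ (σ ^ 2)⁻¹ * K * ((‖z‖ + 1 + ‖y‖) * ρ y) := by
            refine mul_le_mul_of_nonneg_left ?_ (by positivity)
            refine mul_le_mul_of_nonneg_right ?_ (hρpos y)
            linarith
    · filter_upwards with y
      intro x _
      exact hderiv y x
  have hEq : (∫ y, F' z y) = (InnerProductSpace.toDual ℝ _) v := by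
    refine ContinuousLinearMap.ext fun w => ?_
    rw [ContinuousLinearMap.integral_apply hF'int, InnerProductSpace.toDual_apply_apply]
    have hT1 : Integrable (fun y : EuclideanSpace ℝ (Fin d) =>
        ⟪y, w⟫ * (gaussKernel d (σ ^ 2) (z - y) * ρ y)) volume := by
      refine (((innerSL ℝ w).integrable_comp (hI2 z))).congr ?_
      filter_upwards with y
      simp only [innerSL_apply_apply]
      rw [real_inner_smul_right, real_inner_comm]
      ring
    have hT2 : Integrable (fun y : EuclideanSpace ℝ (Fin d) =>
        ⟪z, w⟫ * (gaussKernel d (σ ^ 2) (z - y) * ρ y)) volume := (hI1 z).const_mul _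
    have hMzw : (∫ y, ⟪y, w⟫ * (gaussKernel d (σ ^ 2) (z - y) * ρ y)) = ⟪Mz, w⟫ := by
      have hcomm := (innerSL ℝ w).integral_comp_comm (hI2 z)
      calc (∫ y, ⟪y, w⟫ * (gaussKernel d (σ ^ 2) (z - y) * ρ y))
          = ∫ y, (innerSL ℝ w) ((gaussKernel d (σ ^ 2) (z - y) * ρ y) • y) := by
            refine integral_congr_ae (Filter.Eventually.of_forall fun y => ?_)
            simp only [innerSL_apply_apply]
            rw [real_inner_smul_right, real_inner_comm]
            ring
        _ = (innerSL ℝ w) Mz := by rw [hcomm, hMzdef]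
        _ = ⟪Mz, w⟫ := by rw [innerSL_apply_apply, real_inner_comm]
    calc (∫ y, (F' z y) w)
        = ∫ y, (σ ^ 2)⁻¹ * (⟪y, w⟫ * (gaussKernel d (σ ^ 2) (z - y) * ρ y)
            - ⟪z, w⟫ * (gaussKernel d (σ ^ 2) (z - y) * ρ y)) := by
          refine integral_congr_ae (Filter.Eventually.of_forall fun y => ?_)
          rw [hF'def]
          simp only [ContinuousLinearMap.smul_apply, innerSL_apply_apply, smul_eq_mul]
          rw [inner_sub_left]
          ring
      _ = (σ ^ 2)⁻¹ * ((∫ y, ⟪y, w⟫ * (gaussKernel d (σ ^ 2) (z - y) * ρ y))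
            - ∫ y, ⟪z, w⟫ * (gaussKernel d (σ ^ 2) (z - y) * ρ y)) := by
          rw [integral_const_mul, integral_sub hT1 hT2]
      _ = (σ ^ 2)⁻¹ * (⟪Mz, w⟫ - ⟪z, w⟫ * Dz) := by
          rw [hMzw, integral_const_mul, hDzdef]
          rfl
      _ = ⟪v, w⟫ := by
          rw [hvdef, real_inner_smul_left, inner_sub_left, real_inner_smul_left]
          ring
  have hgradD : HasGradientAt (noisyDensity d σ ρ) v z := by
    rw [hasGradientAt_iff_hasFDerivAt]
    rw [← hEq]
    exact happ
  have hlog : HasGradientAt (fun u => Real.log (noisyDensity d σ ρ u)) (Dz⁻¹ • v) z := by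
    rw [hasGradientAt_iff_hasFDerivAt, _root_.map_smul]
    exact (Real.hasDerivAt_log (hpos z).ne').comp_hasFDerivAt z hgradD.hasFDerivAt
  rw [hlog.gradient]
  have hD : Dz ≠ 0 := (hpos z).ne'
  have hσ2 : (σ ^ 2 : ℝ) ≠ 0 := hτ.ne'
  rw [hvdef]
  rw [smul_smul, smul_smul]
  have hcoef : σ ^ 2 * Dz⁻¹ * (σ ^ 2)⁻¹ = Dz⁻¹ := by
    field_simp
  rw [hcoef, smul_sub, smul_smul, inv_mul_cancel₀ hD, one_smul]
  have : tweediePostMean d σ ρ z = Dz⁻¹ • Mz := rfl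
  rw [this]
  abel

end
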